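/- The star product ⋆ is with separation of variables: if f_1 is holomorphic on U or f_2 is anti-holomorphic on U, then f_1 ⋆ f_2 = f_1 f_2; equivalently, D_k(f_1, f_2) = 0 for every k ≥ 1 in these cases. This follows because in every graph in A_2 the first external vertex has no incoming edges and the second external vertex has no outgoing edges. -/

import Mathlib

open Finset

/-! ### Functions on `ℂ^m` and Wirtinger derivatives -/

/-- Points of `ℂ^m`. -/
abbrev Cm (m : ℕ) := Fin m → ℂ

/-- Complex-valued functions on `ℂ^m`. -/
abbrev Fn (m : ℕ) := Cm m → ℂ

/-- The Wirtinger derivative `∂/∂z^p`. -/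
noncomputable def dz {m : ℕ} (p : Fin m) (f : Fn m) : Fn m := fun x =>
  (2 : ℂ)⁻¹ * (fderiv ℝ f x (Pi.single p 1) - Complex.I * fderiv ℝ f x (Pi.single p Complex.I))

/-- The Wirtinger derivative `∂/∂z̄^p`. -/
noncomputable def dzbar {m : ℕ} (p : Fin m) (f : Fn m) : Fn m := fun x =>
  (2 : ℂ)⁻¹ * (fderiv ℝ f x (Pi.single p 1) + Complex.I * fderiv ℝ f x (Pi.single p Complex.I))

/-- Iterated holomorphic derivatives `∂^{|L|} f / ∂z^{L}`. -/
noncomputable def dzList {m : ℕ} (L : List (Fin m)) (f : Fn m) : Fn m := L.foldr dz f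

/-- Iterated antiholomorphic derivatives `∂^{|L|} f / ∂z̄^{L}`. -/
noncomputable def dzbarList {m : ℕ} (L : List (Fin m)) (f : Fn m) : Fn m := L.foldr dzbar f

/-- The matrix `g_{p q̄} = ∂² Φ_{-1} / ∂z^p ∂z̄^q` of the (formal) Kähler metric determined
by a formal potential `Φ` (given by its coefficients `Φ w`, `w ≥ -1`). -/
noncomputable def gMat {m : ℕ} (Φ : ℤ → Fn m) (x : Cm m) : Matrix (Fin m) (Fin m) ℂ :=
  Matrix.of fun p q => dzbar q (dz p (Φ (-1))) x

/-- The entries `g^{q̄ p}` of the pointwise inverse of the metric matrix. -/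
noncomputable def gInv {m : ℕ} (Φ : ℤ → Fn m) (q p : Fin m) : Fn m := fun x => (gMat Φ x)⁻¹ q p

/-- A formal potential is admissible on `U` when all its coefficients are smooth on `U`
and the metric matrix is invertible at every point of `U`. -/
def PotentialOK {m : ℕ} (Φ : ℤ → Fn m) (U : Set (Cm m)) : Prop :=
  (∀ w : ℤ, -1 ≤ w → ContDiffOn ℝ (⊤ : ℕ∞) (Φ w) U) ∧ ∀ x ∈ U, IsUnit (gMat Φ x)

/-! ### Weighted acyclic graphs with `n` external vertices -/

/-- A weighted acyclic graph with `n` (numbered, distinct) external vertices: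
finitely many vertices and directed edges (parallel edges allowed, no directed cycles),
every internal vertex (i.e. vertex not in the range of `ext`) has weight `≥ -1`, weight `-1`
internal vertices have degree at least 3, every internal vertex has at least one incoming and
one outgoing edge, the first external vertex is a source and the last one is a sink.
External vertices carry the (irrelevant) weight `0` by convention. -/
structure WGraph (n : ℕ) where
  nV : ℕ
  nE : ℕ
  head : Fin nE → Fin nV
  tail : Fin nE → Fin nV
  ext : Fin n ↪ Fin nV
  wt : Fin nV → ℤ
  acyclic : ∀ v, ¬ Relation.TransGen (fun a b => ∃ e, tail e = a ∧ head e = b) v v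
  wt_ext : ∀ i, wt (ext i) = 0
  wt_ge : ∀ v, (∀ i, ext i ≠ v) → -1 ≤ wt v
  internal_in : ∀ v, (∀ i, ext i ≠ v) → ∃ e, head e = v
  internal_out : ∀ v, (∀ i, ext i ≠ v) → ∃ e, tail e = v
  wt_neg_deg : ∀ v, (∀ i, ext i ≠ v) → wt v = -1 →
    3 ≤ (univ.filter fun e => head e = v).card + (univ.filter fun e => tail e = v).card
  first_source : ∀ (e) (i : Fin n), head e = ext i → (i : ℕ) ≠ 0
  last_sink : ∀ (e) (i : Fin n), tail e = ext i → (i : ℕ) ≠ n - 1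

namespace WGraph

variable {n : ℕ}

/-- A vertex is internal when it is not one of the external vertices. -/
def Internal (G : WGraph n) (v : Fin G.nV) : Prop := ∀ i, G.ext i ≠ v

/-- `G.edgeRel a b` holds when there is an edge from `a` to `b`. -/
def edgeRel (G : WGraph n) (a b : Fin G.nV) : Prop := ∃ e, G.tail e = a ∧ G.head e = b

/-- Reachability along directed paths (reflexive-transitive closure of `edgeRel`);
`G.Reach a b` with `a ≠ b` says that `b` is a successor of `a`. -/
def Reach (G : WGraph n) : Fin G.nV → Fin G.nV → Prop := Relation.ReflTransGen G.edgeRel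

/-- Number of incoming edges of a vertex. -/
def inDeg (G : WGraph n) (v : Fin G.nV) : ℕ := (univ.filter fun e => G.head e = v).card

/-- Number of outgoing edges of a vertex. -/
def outDeg (G : WGraph n) (v : Fin G.nV) : ℕ := (univ.filter fun e => G.tail e = v).card

/-- Total weight `W(G) = |E_G| + Σ_{v internal} w(v)` (external vertices have weight 0). -/
def W (G : WGraph n) : ℤ := (G.nE : ℤ) + ∑ v, G.wt v

/-- Isomorphism of weighted graphs with numbered external vertices: bijections of
vertices and edges preserving heads, tails, the numbered external vertices, and weights. -/
def Iso (G G' : WGraph n) : Prop :=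
  ∃ (σ : Fin G.nV ≃ Fin G'.nV) (τ : Fin G.nE ≃ Fin G'.nE),
    (∀ e, G'.head (τ e) = σ (G.head e)) ∧ (∀ e, G'.tail (τ e) = σ (G.tail e)) ∧
    (∀ i, G'.ext i = σ (G.ext i)) ∧ (∀ v, G'.wt (σ v) = G.wt v)

/-- The order `|Aut(G)|` of the automorphism group of `G`. -/
noncomputable def autCard (G : WGraph n) : ℕ :=
  Nat.card {p : (Fin G.nV ≃ Fin G.nV) × (Fin G.nE ≃ Fin G.nE) //
    (∀ e, G.head (p.2 e) = p.1 (G.head e)) ∧ (∀ e, G.tail (p.2 e) = p.1 (G.tail e)) ∧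
    (∀ i, G.ext i = p.1 (G.ext i)) ∧ (∀ v, G.wt (p.1 v) = G.wt v)}

/-- The number of (concretely presented) graphs isomorphic to `G`. -/
noncomputable def classCard (G : WGraph n) : ℕ := Nat.card {G' : WGraph n // G.Iso G'}

end WGraph

/-! ### Labellings and partition functions -/

/-- A labelling of a graph assigns to each edge `e` a pair of indices in `{1, …, m}`:
`(l e).1` is the label of `e` at its tail (used as an antiholomorphic index there) and
`(l e).2` is the label of `e` at its head (used as a holomorphic index there).  This is
exactly the data of an index `l(v,e)` for every incident pair of a vertex and an edge. -/
abbrev Labelling (m : ℕ) {n : ℕ} (G : WGraph n) := Fin G.nE → Fin m × Fin m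

/-- The labels assigned at `v` to the incoming edges of `v` (in the canonical edge order). -/
def inLabels {m n : ℕ} (G : WGraph n) (l : Labelling m G) (v : Fin G.nV) : List (Fin m) :=
  ((List.finRange G.nE).filter fun e => G.head e = v).map fun e => (l e).2

/-- The labels assigned at `v` to the outgoing edges of `v` (in the canonical edge order). -/
def outLabels {m n : ℕ} (G : WGraph n) (l : Labelling m G) (v : Fin G.nV) : List (Fin m) :=
  ((List.finRange G.nE).filter fun e => G.tail e = v).map fun e => (l e).1

/-- The factor `F(v)` associated to a vertex: the mixed partial derivative
`∂^{p+q} f_k/∂z^{i_1}⋯∂z^{i_p}∂z̄^{j_1}⋯∂z̄^{j_q}` of `f_k` if `v` is the `k`-th external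
vertex, and `-∂^{p+q} Φ_w/∂z^{i_1}⋯∂z^{i_p}∂z̄^{j_1}⋯∂z̄^{j_q}` if `v` is internal of
weight `w`, where the holomorphic indices are the labels of the incoming edges at `v` and the
antiholomorphic indices are the labels of the outgoing edges at `v`. -/
noncomputable def vertexFn {m n : ℕ} (Φ : ℤ → Fn m) (G : WGraph n) (l : Labelling m G)
    (f : Fin n → Fn m) (v : Fin G.nV) : Fn m :=
  if h : ∃ i, G.ext i = v then
    dzList (inLabels G l v) (dzbarList (outLabels G l v) (f h.choose))
  else
    fun x => -(dzList (inLabels G l v) (dzbarList (outLabels G l v) (Φ (G.wt v))) x)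

/-- The partition function `Λ^l_G(f_1, …, f_n)` of a labelled graph: the product over all
vertices of the vertex factors and over all edges `e` (from `u` to `v`, with `s = l(u,e)`,
`r = l(v,e)`) of the factors `g^{s̄ r}`. -/
noncomputable def Lam {m n : ℕ} (Φ : ℤ → Fn m) (G : WGraph n) (l : Labelling m G)
    (f : Fin n → Fn m) : Fn m :=
  fun x => (∏ v, vertexFn Φ G l f v x) * ∏ e, gInv Φ (l e).1 (l e).2 x

/-- The partition function `Γ_G(f_1, …, f_n)`: the contraction, along the edges of `G` and
using the inverse metric `g^{q̄p}`, of the tensors of partial derivatives attached to the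
vertices; equivalently the sum over all labellings of `Λ^l_G(f_1, …, f_n)`. -/
noncomputable def Gam {m n : ℕ} (Φ : ℤ → Fn m) (G : WGraph n) (f : Fin n → Fn m) : Fn m :=
  fun x => ∑ l : Labelling m G, Lam Φ G l f x

/-- The operator `D_k(f_1, …, f_n) = Σ_{G ∈ 𝒜_n(k)} Γ_G(f_1, …, f_n)/|Aut(G)|`, the sum
being over isomorphism classes of weighted acyclic graphs of total weight `k`; concretely
each isomorphism class is summed via all its concrete representatives, each weighted by
the reciprocal of the number of such representatives. -/
noncomputable def Dk (m : ℕ) (Φ : ℤ → Fn m) (n k : ℕ) (f : Fin n → Fn m) : Fn m := fun x =>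
  ∑ᶠ G : WGraph n, if G.W = (k : ℤ) then
    Gam Φ G f x / ((G.classCard : ℂ) * (G.autCard : ℂ)) else 0

/-- The coefficient of `h^k` in the `ℂ[[h]]`-bilinear extension of the star product
`f₁ ⋆ f₂ = Σ_k D_k(f₁,f₂) h^k` to formal power series `Σ f_i h^i`, `Σ g_j h^j` of functions
(a formal power series is encoded by its coefficient sequence `ℕ → Fn m`). -/
noncomputable def starCoeff {m : ℕ} (Φ : ℤ → Fn m) (f g : ℕ → Fn m) (k : ℕ) : Fn m := fun x =>
  ∑ p ∈ Finset.range (k + 1), ∑ q ∈ Finset.range (k + 1 - p),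
    Dk m Φ 2 (k - p - q) ![f p, g q] x

variable {m : ℕ}

lemma single_I_eq (p : Fin m) : (Pi.single p Complex.I : Cm m) = Complex.I • (Pi.single p 1 : Cm m) := by
  funext q
  by_cases hq : q = p
  · subst hq; simp
  · simp [Pi.single_eq_of_ne hq]

lemma fderiv_single_I {f : Fn m} {x : Cm m} (hf : DifferentiableAt ℂ f x) (p : Fin m) :
    fderiv ℝ f x (Pi.single p Complex.I) = Complex.I * fderiv ℝ f x (Pi.single p 1) := by
  have h1 : fderiv ℝ f x = (fderiv ℂ f x).restrictScalars ℝ :=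
    (hf.hasFDerivAt.restrictScalars ℝ).fderiv
  rw [h1, single_I_eq]
  simp [smul_eq_mul]

lemma dzbar_eq_zero {f : Fn m} {x : Cm m} (hf : DifferentiableAt ℂ f x) (p : Fin m) :
    dzbar p f x = 0 := by
  have := fderiv_single_I hf p
  simp only [dzbar, this]
  rw [← mul_assoc, Complex.I_mul_I]
  ring

lemma dz_eq_zero {f : Fn m} {x : Cm m}
    (hg : DifferentiableAt ℂ (fun y => starRingEnd ℂ (f y)) x) (p : Fin m) :
    dz p f x = 0 := by
  set g : Fn m := fun y => starRingEnd ℂ (f y) with hgdef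
  have hgR : HasFDerivAt g (fderiv ℝ g x) x := (hg.restrictScalars ℝ).hasFDerivAt
  have hcomp : HasFDerivAt f
      ((Complex.conjCLE.toContinuousLinearMap).comp (fderiv ℝ g x)) x := by
    have h := Complex.conjCLE.hasFDerivAt.comp x hgR
    have heq : (⇑Complex.conjCLE ∘ g) = f := by
      funext y; simp [hgdef, Complex.conjCLE_apply]
    rwa [heq] at h
  have hD := hcomp.fderiv
  have hI := fderiv_single_I hg p
  simp only [dz, hD, ContinuousLinearMap.coe_comp', Function.comp_apply,
    Complex.conjCLE_apply]
  rw [hI]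
  have hc : ∀ z : ℂ, Complex.conjCLE.toContinuousLinearMap z = (starRingEnd ℂ) z :=
    fun z => rfl
  simp only [hc, map_mul, Complex.conj_I]
  ring_nf
  rw [Complex.I_sq]
  ring

lemma dz_zero_of_eqOn {f : Fn m} {U : Set (Cm m)} (hU : IsOpen U)
    (h : ∀ y ∈ U, f y = 0) {x} (hx : x ∈ U) (p : Fin m) : dz p f x = 0 := by
  have hev : f =ᶠ[nhds x] (fun _ => 0) := Filter.eventually_of_mem (hU.mem_nhds hx) h
  have h2 : fderiv ℝ f x = fderiv ℝ (fun _ : Cm m => (0:ℂ)) x := hev.fderiv_eq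
  simp [dz, h2]

lemma dzbar_zero_of_eqOn {f : Fn m} {U : Set (Cm m)} (hU : IsOpen U)
    (h : ∀ y ∈ U, f y = 0) {x} (hx : x ∈ U) (p : Fin m) : dzbar p f x = 0 := by
  have hev : f =ᶠ[nhds x] (fun _ => 0) := Filter.eventually_of_mem (hU.mem_nhds hx) h
  have h2 : fderiv ℝ f x = fderiv ℝ (fun _ : Cm m => (0:ℂ)) x := hev.fderiv_eq
  simp [dzbar, h2]

lemma dzbarList_zero {f : Fn m} {U : Set (Cm m)} (hU : IsOpen U) (h : ∀ y ∈ U, f y = 0) :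
    ∀ (L : List (Fin m)), ∀ x ∈ U, dzbarList L f x = 0
  | [], x, hx => h x hx
  | (a :: L), x, hx =>
    dzbar_zero_of_eqOn hU (fun y hy => dzbarList_zero hU h L y hy) hx a

lemma dzList_zero {f : Fn m} {U : Set (Cm m)} (hU : IsOpen U) (h : ∀ y ∈ U, f y = 0) :
    ∀ (L : List (Fin m)), ∀ x ∈ U, dzList L f x = 0
  | [], x, hx => h x hx
  | (a :: L), x, hx =>
    dz_zero_of_eqOn hU (fun y hy => dzList_zero hU h L y hy) hx a

lemma dzbarList_holo {f : Fn m} {U : Set (Cm m)} (hU : IsOpen U)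
    (hf : DifferentiableOn ℂ f U) :
    ∀ (L : List (Fin m)), L ≠ [] → ∀ x ∈ U, dzbarList L f x = 0
  | [], hL => absurd rfl hL
  | [a], _ => fun x hx =>
      dzbar_eq_zero ((hf x hx).differentiableAt (hU.mem_nhds hx)) a
  | (a :: b :: L), _ => fun x hx =>
      dzbar_zero_of_eqOn hU
        (fun y hy => dzbarList_holo hU hf (b :: L) (by simp) y hy) hx a

lemma dzList_anti {f : Fn m} {U : Set (Cm m)} (hU : IsOpen U)
    (hf : DifferentiableOn ℂ (fun y => starRingEnd ℂ (f y)) U) :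
    ∀ (L : List (Fin m)), L ≠ [] → ∀ x ∈ U, dzList L f x = 0
  | [], hL => absurd rfl hL
  | [a], _ => fun x hx =>
      dz_eq_zero ((hf x hx).differentiableAt (hU.mem_nhds hx)) a
  | (a :: b :: L), _ => fun x hx =>
      dz_zero_of_eqOn hU
        (fun y hy => dzList_anti hU hf (b :: L) (by simp) y hy) hx a

/-! ### Auxiliary graph lemmas -/

namespace WGraph

variable {n : ℕ}

lemma sum_inDeg (G : WGraph n) : ∑ v, G.inDeg v = G.nE := by
  unfold WGraph.inDeg
  have h := Finset.card_eq_sum_card_fiberwise (s := Finset.univ) (t := Finset.univ)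
    (fun e _ => Finset.mem_univ (G.head e))
  rw [Finset.card_univ, Fintype.card_fin] at h
  exact h.symm

lemma sum_outDeg (G : WGraph n) : ∑ v, G.outDeg v = G.nE := by
  unfold WGraph.outDeg
  have h := Finset.card_eq_sum_card_fiberwise (s := Finset.univ) (t := Finset.univ)
    (fun e _ => Finset.mem_univ (G.tail e))
  rw [Finset.card_univ, Fintype.card_fin] at h
  exact h.symm

lemma nE_le_three_mul_W (G : WGraph n) : (G.nE : ℤ) ≤ 3 * G.W := by
  classical
  set S : Finset (Fin G.nV) := Finset.univ.filter (fun v => G.wt v = -1) with hS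
  have hwt_ge : ∀ v, -1 ≤ G.wt v := by
    intro v
    by_cases hv : ∀ i, G.ext i ≠ v
    · exact G.wt_ge v hv
    · push_neg at hv
      obtain ⟨i, hi⟩ := hv
      rw [← hi, G.wt_ext]; norm_num
  have hdeg : ∀ v ∈ S, 3 ≤ G.inDeg v + G.outDeg v := by
    intro v hv
    rw [hS, Finset.mem_filter] at hv
    have hint : ∀ i, G.ext i ≠ v := by
      intro i hi
      have := G.wt_ext i
      rw [hi, hv.2] at this
      norm_num at this
    exact G.wt_neg_deg v hint hv.2
  have h3card : 3 * S.card ≤ 2 * G.nE := by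
    calc 3 * S.card = ∑ _v ∈ S, 3 := by rw [Finset.sum_const]; ring
    _ ≤ ∑ v ∈ S, (G.inDeg v + G.outDeg v) := Finset.sum_le_sum hdeg
    _ ≤ ∑ v, (G.inDeg v + G.outDeg v) :=
        Finset.sum_le_sum_of_subset (Finset.subset_univ S)
    _ = 2 * G.nE := by rw [Finset.sum_add_distrib, G.sum_inDeg, G.sum_outDeg]; ring
  have hsum : -(S.card : ℤ) ≤ ∑ v, G.wt v := by
    have hpt : ∀ v ∈ Finset.univ, (if G.wt v = -1 then (-1 : ℤ) else 0) ≤ G.wt v := by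
      intro v _
      by_cases hv : G.wt v = -1
      · rw [if_pos hv, hv]
      · rw [if_neg hv]
        have := hwt_ge v
        omega
    calc -(S.card : ℤ) = ∑ v, (if G.wt v = -1 then (-1 : ℤ) else 0) := by
          rw [Finset.sum_ite, Finset.sum_const, Finset.sum_const, hS]
          simp
    _ ≤ ∑ v, G.wt v := Finset.sum_le_sum hpt
  rw [WGraph.W]
  have h3c : 3 * (S.card : ℤ) ≤ 2 * (G.nE : ℤ) := by exact_mod_cast h3card
  linarith

lemma W_eq_zero_of_nE_eq_zero (G : WGraph n) (h : G.nE = 0) : G.W = 0 := by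
  have hwt : ∀ v, G.wt v = 0 := by
    intro v
    by_cases hv : ∀ i, G.ext i ≠ v
    · obtain ⟨e, _⟩ := G.internal_in v hv
      have := e.isLt
      omega
    · push_neg at hv
      obtain ⟨i, hi⟩ := hv
      rw [← hi, G.wt_ext]
  rw [WGraph.W, h]
  simp [hwt]

lemma nE_eq_zero_of_W_eq_zero (G : WGraph n) (h : G.W = 0) : G.nE = 0 := by
  have := G.nE_le_three_mul_W
  rw [h] at this
  omega

lemma nE_pos_of_W_pos (G : WGraph n) (h : 0 < G.W) : 0 < G.nE := by
  rcases Nat.eq_zero_or_pos G.nE with h0 | h1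
  · rw [G.W_eq_zero_of_nE_eq_zero h0] at h; omega
  · exact h1

lemma exists_tail_ext0 (G : WGraph 2) (h : 0 < G.nE) : ∃ e, G.tail e = G.ext 0 := by
  classical
  haveI : IsTrans (Fin G.nV) (Relation.TransGen G.edgeRel) :=
    ⟨fun _ _ _ => Relation.TransGen.trans⟩
  haveI : IsIrrefl (Fin G.nV) (Relation.TransGen G.edgeRel) :=
    ⟨fun v hv => G.acyclic v hv⟩
  have hwf := Finite.wellFounded_of_trans_of_irrefl (Relation.TransGen G.edgeRel)
  have hS : Set.Nonempty {v : Fin G.nV | ∃ e, G.tail e = v} := ⟨G.tail ⟨0, h⟩, ⟨0, h⟩, rfl⟩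
  obtain ⟨v, hvS, hmin⟩ := hwf.has_min _ hS
  by_cases hint : ∀ i, G.ext i ≠ v
  · obtain ⟨e, he⟩ := G.internal_in v hint
    exact absurd (Relation.TransGen.single ⟨e, rfl, he⟩) (hmin (G.tail e) ⟨e, rfl⟩)
  · push_neg at hint
    obtain ⟨i, hi⟩ := hint
    obtain ⟨e, he⟩ := hvS
    have hne := G.last_sink e i (he.trans hi.symm)
    have hival : (i : ℕ) = 0 := by
      have := i.isLt
      omega
    have hi0 : i = 0 := Fin.ext hival
    exact ⟨e, by rw [he, ← hi, hi0]⟩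

lemma exists_head_ext1 (G : WGraph 2) (h : 0 < G.nE) : ∃ e, G.head e = G.ext 1 := by
  classical
  haveI : IsTrans (Fin G.nV) (fun a b => Relation.TransGen G.edgeRel b a) :=
    ⟨fun _ _ _ h1 h2 => Relation.TransGen.trans h2 h1⟩
  haveI : IsIrrefl (Fin G.nV) (fun a b => Relation.TransGen G.edgeRel b a) :=
    ⟨fun v hv => G.acyclic v hv⟩
  have hwf := Finite.wellFounded_of_trans_of_irrefl
    (fun a b : Fin G.nV => Relation.TransGen G.edgeRel b a)
  have hS : Set.Nonempty {v : Fin G.nV | ∃ e, G.head e = v} := ⟨G.head ⟨0, h⟩, ⟨0, h⟩, rfl⟩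
  obtain ⟨v, hvS, hmin⟩ := hwf.has_min _ hS
  by_cases hint : ∀ i, G.ext i ≠ v
  · obtain ⟨e, he⟩ := G.internal_out v hint
    exact absurd (Relation.TransGen.single ⟨e, he, rfl⟩) (hmin (G.head e) ⟨e, rfl⟩)
  · push_neg at hint
    obtain ⟨i, hi⟩ := hint
    obtain ⟨e, he⟩ := hvS
    have hne := G.first_source e i (he.trans hi.symm)
    have hival : (i : ℕ) = 1 := by
      have := i.isLt
      omega
    have hi1 : i = 1 := Fin.ext hival
    exact ⟨e, by rw [he, ← hi, hi1]⟩

lemma inDeg_ext0 (G : WGraph 2) : G.inDeg (G.ext 0) = 0 := by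
  rw [WGraph.inDeg, Finset.card_eq_zero, Finset.filter_eq_empty_iff]
  intro e _ he
  exact G.first_source e 0 he rfl

lemma outDeg_ext1 (G : WGraph 2) : G.outDeg (G.ext 1) = 0 := by
  rw [WGraph.outDeg, Finset.card_eq_zero, Finset.filter_eq_empty_iff]
  intro e _ he
  exact G.last_sink e 1 he (by norm_num)

end WGraph


/-! ### The trivial graphs of weight 0 -/

/-- The weight-0 graph: two external vertices, no edges, parametrized by which vertex of
`Fin 2` is which external vertex. -/
def trivGraph (sigma : Fin 2 ≃ Fin 2) : WGraph 2 where
  nV := 2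
  nE := 0
  head := Fin.elim0
  tail := Fin.elim0
  ext := sigma.toEmbedding
  wt := fun _ => 0
  acyclic := fun v hv => by
    cases hv with
    | single h => exact h.choose.elim0
    | tail _ h => exact h.choose.elim0
  wt_ext := fun i => rfl
  wt_ge := fun v _ => by norm_num
  internal_in := fun v hv => absurd (by simp : sigma.toEmbedding (sigma.symm v) = v)
    (hv (sigma.symm v))
  internal_out := fun v hv => absurd (by simp : sigma.toEmbedding (sigma.symm v) = v)
    (hv (sigma.symm v))
  wt_neg_deg := fun v _ h => by norm_num at h
  first_source := fun e => e.elim0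
  last_sink := fun e => e.elim0

lemma trivGraph_W (sigma : Fin 2 ≃ Fin 2) : (trivGraph sigma).W = 0 := by
  rw [WGraph.W]
  simp [trivGraph]

lemma fin2_equiv_cases : ∀ sigma : Fin 2 ≃ Fin 2,
    sigma = Equiv.refl (Fin 2) ∨ sigma = Equiv.swap 0 1 := by decide

lemma trivGraph_inj : Function.Injective trivGraph := by
  intro a b h
  ext i
  have := congrArg (fun G : WGraph 2 => ((G.ext i : Fin G.nV) : ℕ)) h
  exact this

lemma W_eq_of_iso {G G' : WGraph 2} (h : G.Iso G') : G'.W = G.W := by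
  obtain ⟨sigma, tau, hh, ht, he, hw⟩ := h
  have hnE : G'.nE = G.nE := by
    have := Fintype.card_congr tau
    simpa using this.symm
  rw [WGraph.W, WGraph.W, hnE]
  congr 1
  calc ∑ v, G'.wt v = ∑ v, G'.wt (sigma v) := (Equiv.sum_comp sigma G'.wt).symm
  _ = ∑ v, G.wt v := by simp [hw]

lemma eq_trivGraph (G : WGraph 2) (h : G.W = 0) :
    ∃ sigma : Fin 2 ≃ Fin 2, G = trivGraph sigma := by
  have hE : G.nE = 0 := G.nE_eq_zero_of_W_eq_zero h
  have hsurj : Function.Surjective G.ext := by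
    intro v
    by_contra hc
    push_neg at hc
    obtain ⟨e, _⟩ := G.internal_in v (fun i hi => hc i hi)
    have := e.isLt
    omega
  have hbij : Function.Bijective G.ext := ⟨G.ext.injective, hsurj⟩
  have hV : G.nV = 2 := by
    have := Fintype.card_congr (Equiv.ofBijective _ hbij)
    simpa using this.symm
  rcases G with ⟨nV, nE, hd, tl, ex, wt, hac, hwe, hwg, hii, hio, hwn, hfs, hls⟩
  have hE' : nE = 0 := hE
  have hV' : nV = 2 := hV
  subst hE'
  subst hV'
  have hbij' : Function.Bijective ex := hbij
  refine ⟨Equiv.ofBijective ex hbij', ?_⟩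
  have hhd : hd = Fin.elim0 := Subsingleton.elim _ _
  have htl : tl = Fin.elim0 := Subsingleton.elim _ _
  have hwt : wt = fun _ => 0 := by
    funext v
    obtain ⟨i, hi⟩ := hbij'.2 v
    rw [← hi]
    exact hwe i
  subst hhd
  subst htl
  subst hwt
  rfl

lemma trivGraph_iso (a b : Fin 2 ≃ Fin 2) : (trivGraph a).Iso (trivGraph b) := by
  refine ⟨a.symm.trans b, Equiv.refl _, fun e => e.elim0, fun e => e.elim0,
    fun i => ?_, fun v => rfl⟩
  show b i = (a.symm.trans b) (a i)
  simp

lemma classCard_trivGraph (sigma : Fin 2 ≃ Fin 2) : (trivGraph sigma).classCard = 2 := by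
  rw [WGraph.classCard]
  have hiff : ∀ G' : WGraph 2, (trivGraph sigma).Iso G' ↔ ∃ a, trivGraph a = G' := by
    intro G'
    constructor
    · intro h
      have hW : G'.W = 0 := by rw [W_eq_of_iso h, trivGraph_W]
      obtain ⟨a, ha⟩ := eq_trivGraph G' hW
      exact ⟨a, ha.symm⟩
    · rintro ⟨a, rfl⟩
      exact trivGraph_iso sigma a
  have e1 : {G' : WGraph 2 // (trivGraph sigma).Iso G'} ≃ (Fin 2 ≃ Fin 2) :=
    (Equiv.subtypeEquivRight hiff).trans (Equiv.ofInjective trivGraph trivGraph_inj).symm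
  rw [Nat.card_congr e1, Nat.card_eq_fintype_card, Fintype.card_equiv (Equiv.refl _)]
  rfl

lemma autCard_trivGraph (sigma : Fin 2 ≃ Fin 2) : (trivGraph sigma).autCard = 1 := by
  rw [WGraph.autCard, Nat.card_eq_one_iff_unique]
  constructor
  · constructor
    rintro ⟨⟨p1, p2⟩, hp⟩ ⟨⟨q1, q2⟩, hq⟩
    have h1 : p1 = q1 := by
      ext v
      have hp' := hp.2.2.1 (sigma.symm v)
      have hq' := hq.2.2.1 (sigma.symm v)
      simp only [trivGraph, Equiv.coe_toEmbedding, Equiv.toEmbedding_apply, Equiv.apply_symm_apply] at hp' hq'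
      have e : sigma.toEmbedding (sigma.symm v) = v := sigma.apply_symm_apply v
      exact congrArg _ (e ▸ (hp'.symm.trans hq'))
    have h2 : p2 = q2 := by
      ext e
      have h0 : (trivGraph sigma).nE = 0 := rfl
      have := e.isLt
      omega
    apply Subtype.ext
    rw [Prod.ext_iff]
    exact ⟨h1, h2⟩
  · exact ⟨⟨⟨Equiv.refl _, Equiv.refl _⟩, fun e => e.elim0, fun e => e.elim0,
      fun i => rfl, fun v => rfl⟩⟩


/-! ### Partition function computations -/

lemma vertexFn_ext {m : ℕ} (Φ : ℤ → Fn m) (G : WGraph 2) (l : Labelling m G)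
    (f : Fin 2 → Fn m) (i : Fin 2) :
    vertexFn Φ G l f (G.ext i) =
      dzList (inLabels G l (G.ext i)) (dzbarList (outLabels G l (G.ext i)) (f i)) := by
  have h : ∃ j, G.ext j = G.ext i := ⟨i, rfl⟩
  unfold vertexFn
  rw [dif_pos h]
  have hch : h.choose = i := G.ext.injective h.choose_spec
  rw [hch]

lemma inLabels_ext0 {m : ℕ} (G : WGraph 2) (l : Labelling m G) :
    inLabels G l (G.ext 0) = [] := by
  rw [inLabels, List.map_eq_nil_iff, List.filter_eq_nil_iff]
  intro e _
  simp only [decide_eq_true_eq]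
  exact fun he => G.first_source e 0 he rfl

lemma outLabels_ext1 {m : ℕ} (G : WGraph 2) (l : Labelling m G) :
    outLabels G l (G.ext 1) = [] := by
  rw [outLabels, List.map_eq_nil_iff, List.filter_eq_nil_iff]
  intro e _
  simp only [decide_eq_true_eq]
  exact fun he => G.last_sink e 1 he (by norm_num)

lemma outLabels_ext0_ne {m : ℕ} (G : WGraph 2) (l : Labelling m G) (h : 0 < G.nE) :
    outLabels G l (G.ext 0) ≠ [] := by
  obtain ⟨e, he⟩ := G.exists_tail_ext0 h
  have hmem : (l e).1 ∈ outLabels G l (G.ext 0) := by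
    apply List.mem_map_of_mem
    rw [List.mem_filter]
    exact ⟨List.mem_finRange e, by simp [he]⟩
  exact List.ne_nil_of_mem hmem

lemma inLabels_ext1_ne {m : ℕ} (G : WGraph 2) (l : Labelling m G) (h : 0 < G.nE) :
    inLabels G l (G.ext 1) ≠ [] := by
  obtain ⟨e, he⟩ := G.exists_head_ext1 h
  have hmem : (l e).2 ∈ inLabels G l (G.ext 1) := by
    apply List.mem_map_of_mem
    rw [List.mem_filter]
    exact ⟨List.mem_finRange e, by simp [he]⟩
  exact List.ne_nil_of_mem hmem

lemma Gam_trivGraph {m : ℕ} (Φ : ℤ → Fn m) (sigma : Fin 2 ≃ Fin 2) (f : Fin 2 → Fn m)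
    (x : Cm m) : Gam Φ (trivGraph sigma) f x = f 0 x * f 1 x := by
  have hLam : ∀ l : Labelling m (trivGraph sigma),
      Lam Φ (trivGraph sigma) l f x = f 0 x * f 1 x := by
    intro l
    rw [Lam]
    have hprod : (∏ e : Fin (trivGraph sigma).nE, gInv Φ (l e).1 (l e).2 x) = 1 := by
      haveI : IsEmpty (Fin (trivGraph sigma).nE) := by
        rw [show (trivGraph sigma).nE = 0 from rfl]
        infer_instance
      apply Finset.prod_of_isEmpty
    rw [hprod, mul_one]
    have hv : ∀ v : Fin (trivGraph sigma).nV,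
        vertexFn Φ (trivGraph sigma) l f v = f (sigma.symm v) := by
      intro v
      have hveq : (trivGraph sigma).ext (sigma.symm v) = v := by
        exact sigma.apply_symm_apply v
      conv_lhs => rw [← hveq]
      rw [vertexFn_ext]
      have h1 : inLabels (trivGraph sigma) l ((trivGraph sigma).ext (sigma.symm v)) = [] := by
        simp [inLabels, trivGraph, List.finRange_zero]
      have h2 : outLabels (trivGraph sigma) l ((trivGraph sigma).ext (sigma.symm v)) = [] := by
        simp [outLabels, trivGraph, List.finRange_zero]
      rw [h1, h2]
      rfl
    calc (∏ v, vertexFn Φ (trivGraph sigma) l f v x)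
        = ∏ v : Fin 2, f (sigma.symm v) x := Finset.prod_congr rfl (fun v _ => by rw [hv v])
    _ = ∏ v : Fin 2, f v x := Equiv.prod_comp sigma.symm (fun v => f v x)
    _ = f 0 x * f 1 x := Fin.prod_univ_two _
  rw [Gam]
  calc (∑ l : Labelling m (trivGraph sigma), Lam Φ (trivGraph sigma) l f x)
      = ∑ _l : Labelling m (trivGraph sigma), f 0 x * f 1 x :=
        Finset.sum_congr rfl (fun l _ => hLam l)
  _ = f 0 x * f 1 x := by
      rw [Finset.sum_const, Finset.card_univ]
      have : Fintype.card (Labelling m (trivGraph sigma)) = 1 := by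
        rw [Fintype.card_eq_one_iff]
        exact ⟨fun e => e.elim0, fun l => funext fun e => e.elim0⟩
      rw [this, one_smul]

/-! ### Statement 9 -/

/-- The star product is with separation of variables: if `f₁` is
holomorphic on `U` or `f₂` is anti-holomorphic on `U`, then `f₁ ⋆ f₂ = f₁ f₂`, i.e.
`D₀(f₁,f₂) = f₁f₂` and `D_k(f₁,f₂) = 0` for every `k ≥ 1`.  This is because in every
graph of `𝒜₂` the first external vertex has no incoming edges and the second external
vertex has no outgoing edges. -/
theorem statement9 {m : ℕ} (hm : 0 < m) (U : Set (Cm m)) (hU : IsOpen U)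
    (hUcontr : ContractibleSpace U) (Φ : ℤ → Fn m) (hΦ : PotentialOK Φ U)
    (f1 f2 : Fn m) (hf1 : ContDiffOn ℝ (⊤ : ℕ∞) f1 U) (hf2 : ContDiffOn ℝ (⊤ : ℕ∞) f2 U)
    (hsep : DifferentiableOn ℂ f1 U ∨
      DifferentiableOn ℂ (fun x => starRingEnd ℂ (f2 x)) U) :
    (∀ G : WGraph 2, G.inDeg (G.ext 0) = 0 ∧ G.outDeg (G.ext 1) = 0) ∧
    Set.EqOn (Dk m Φ 2 0 ![f1, f2]) (f1 * f2) U ∧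
    (∀ k, 1 ≤ k → Set.EqOn (Dk m Φ 2 k ![f1, f2]) 0 U) := by
  have hGamZero : ∀ G : WGraph 2, 0 < G.nE → ∀ x ∈ U, Gam Φ G ![f1, f2] x = 0 := by
    intro G hE x hx
    rw [Gam]
    apply Finset.sum_eq_zero
    intro l _
    rw [Lam]
    have hvz : ∃ v, vertexFn Φ G l ![f1, f2] v x = 0 := by
      rcases hsep with hsep | hsep
      · refine ⟨G.ext 0, ?_⟩
        rw [vertexFn_ext, inLabels_ext0]
        have h0 : (![f1, f2] : Fin 2 → Fn m) 0 = f1 := rfl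
        rw [h0]
        show dzbarList (outLabels G l (G.ext 0)) f1 x = 0
        exact dzbarList_holo hU hsep _ (outLabels_ext0_ne G l hE) x hx
      · refine ⟨G.ext 1, ?_⟩
        rw [vertexFn_ext, outLabels_ext1]
        have h1 : (![f1, f2] : Fin 2 → Fn m) 1 = f2 := rfl
        rw [h1]
        show dzList (inLabels G l (G.ext 1)) f2 x = 0
        exact dzList_anti hU hsep _ (inLabels_ext1_ne G l hE) x hx
    obtain ⟨v, hv⟩ := hvz
    rw [Finset.prod_eq_zero (Finset.mem_univ v) hv, zero_mul]
  refine ⟨fun G => ⟨G.inDeg_ext0, G.outDeg_ext1⟩, ?_, ?_⟩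
  · intro x hx
    show Dk m Φ 2 0 ![f1, f2] x = (f1 * f2) x
    simp only [Dk]
    set T0 := trivGraph (Equiv.refl (Fin 2)) with hT0
    set T1 := trivGraph (Equiv.swap 0 1) with hT1
    have hne : T0 ≠ T1 := by
      intro h
      have := trivGraph_inj h
      exact absurd this (by decide)
    have hstep : (∑ᶠ G : WGraph 2, if G.W = ((0 : ℕ) : ℤ) then
        Gam Φ G ![f1, f2] x / ((G.classCard : ℂ) * (G.autCard : ℂ)) else 0)
        = ∑ᶠ G : WGraph 2,
          Set.indicator ({T0, T1} : Set (WGraph 2)) (fun _ => f1 x * f2 x / 2) G := by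
      apply finsum_congr
      intro G
      by_cases h : G.W = 0
      · rw [if_pos (by exact_mod_cast h)]
        obtain ⟨sigma, rfl⟩ := eq_trivGraph G h
        have hmem : trivGraph sigma ∈ ({T0, T1} : Set (WGraph 2)) := by
          rcases fin2_equiv_cases sigma with rfl | rfl
          · exact Set.mem_insert _ _
          · exact Set.mem_insert_iff.2 (Or.inr rfl)
        rw [Set.indicator_of_mem hmem, Gam_trivGraph, classCard_trivGraph, autCard_trivGraph]
        have hm0 : (![f1, f2] : Fin 2 → Fn m) 0 = f1 := rfl
        have hm1 : (![f1, f2] : Fin 2 → Fn m) 1 = f2 := rfl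
        rw [hm0, hm1]
        norm_num
      · rw [if_neg (by exact_mod_cast h), Set.indicator_of_notMem]
        intro hmem
        rcases hmem with rfl | hmem
        · exact h (trivGraph_W _)
        · rw [Set.mem_singleton_iff] at hmem
          subst hmem
          exact h (trivGraph_W _)
    rw [hstep, ← finsum_mem_def, finsum_mem_pair hne, Pi.mul_apply]
    ring
  · intro k hk x hx
    show Dk m Φ 2 k ![f1, f2] x = (0 : Fn m) x
    simp only [Dk, Pi.zero_apply]
    have hstep : ∀ G : WGraph 2, (if G.W = ((k : ℕ) : ℤ) then
        Gam Φ G ![f1, f2] x / ((G.classCard : ℂ) * (G.autCard : ℂ)) else 0) = 0 := by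
      intro G
      by_cases h : G.W = ((k : ℕ) : ℤ)
      · rw [if_pos h]
        have hWpos : 0 < G.W := by
          rw [h]
          exact_mod_cast hk
        rw [hGamZero G (G.nE_pos_of_W_pos hWpos) x hx, zero_div]
      · rw [if_neg h]
    rw [finsum_congr hstep, finsum_zero]
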